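/- arXiv:2107.08588 — 2 statements merged into one kernel-verified Lean document; each statement's English description precedes it below -/
import Mathlib

section
/- Let H ∈ ℝ^{m×m} be symmetric positive semidefinite and let v, d ∈ ℝ^m. Then v^T H d ≤ (1/2)(v^T d + ‖v‖‖d‖) ‖H‖, where ‖H‖ is the spectral norm of H. -/
/-!
For a positive operator `T` and vectors `u, w`, positivity on `u - w` gives
`4 ⟪T u, w⟫ ≤ ⟪T (u + w), u + w⟫ ≤ ‖T‖ ‖u + w‖²`. Applied to the rescaled vectors
`u = ‖v‖ • d` and `w = ‖d‖ • v`, which both have norm `N = ‖v‖ ‖d‖`, the right-hand side is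
`2 N (N + ⟪v, d⟫) ‖T‖` and the left-hand side is `4 N ⟪T d, v⟫`; dividing by `N` gives the bound.
-/

open Matrix

noncomputable def vnorm {m : ℕ} (v : Fin m → ℝ) : ℝ := Real.sqrt (v ⬝ᵥ v)

noncomputable def opNorm {m : ℕ} (M : Matrix (Fin m) (Fin m) ℝ) : ℝ :=
  ‖Matrix.toEuclideanCLM (𝕜 := ℝ) M‖

open scoped RealInnerProductSpace

namespace ContinuousLinearMap

variable {E : Type*} [NormedAddCommGroup E] [InnerProductSpace ℝ E]

theorem inner_apply_self_le_opNorm_mul_norm_sq (T : E →L[ℝ] E) (x : E) :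
    ⟪T x, x⟫ ≤ ‖T‖ * ‖x‖ ^ 2 :=
  calc ⟪T x, x⟫ ≤ ‖T x‖ * ‖x‖ := real_inner_le_norm _ _
    _ ≤ ‖T‖ * ‖x‖ * ‖x‖ := by gcongr; exact T.le_opNorm x
    _ = ‖T‖ * ‖x‖ ^ 2 := by ring

theorem IsPositive.four_mul_inner_apply_le {T : E →L[ℝ] E} (hT : T.IsPositive) (u w : E) :
    4 * ⟪T u, w⟫ ≤ ⟪T (u + w), u + w⟫ := by
  have hsymm : ⟪T w, u⟫ = ⟪T u, w⟫ := by
    rw [hT.inner_left_eq_inner_right, real_inner_comm]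
  have hdiff := hT.inner_nonneg_left (u - w)
  simp only [map_add, map_sub, inner_add_left, inner_add_right, inner_sub_left,
    inner_sub_right] at hdiff ⊢
  linarith

theorem IsPositive.inner_apply_le {T : E →L[ℝ] E} (hT : T.IsPositive) (v d : E) :
    ⟪T d, v⟫ ≤ 1 / 2 * (⟪v, d⟫ + ‖v‖ * ‖d‖) * ‖T‖ := by
  rcases eq_or_ne v 0 with rfl | hv
  · simp
  rcases eq_or_ne d 0 with rfl | hd
  · simp
  set N := ‖v‖ * ‖d‖
  have hN : 0 < N := by positivity
  have hpos := hT.four_mul_inner_apply_le (‖v‖ • d) (‖d‖ • v)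
  have hnorm := T.inner_apply_self_le_opNorm_mul_norm_sq (‖v‖ • d + ‖d‖ • v)
  have hlhs : ⟪T (‖v‖ • d), ‖d‖ • v⟫ = N * ⟪T d, v⟫ := by
    simp only [map_smul, real_inner_smul_left, real_inner_smul_right, N]
    ring
  have hsq : ‖‖v‖ • d + ‖d‖ • v‖ ^ 2 = 2 * N * (N + ⟪v, d⟫) := by
    simp only [norm_add_sq_real, norm_smul, norm_norm, real_inner_smul_left,
      real_inner_smul_right, real_inner_comm d v, N]
    ring
  rw [hlhs] at hpos
  rw [hsq] at hnorm
  have hscaled : N * ⟪T d, v⟫ ≤ N * (1 / 2 * (⟪v, d⟫ + N) * ‖T‖) := by linarith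
  exact le_of_mul_le_mul_left hscaled hN

end ContinuousLinearMap

theorem Matrix.PosSemidef.isPositive_toEuclideanCLM {n : Type*} [Fintype n] [DecidableEq n]
    {A : Matrix n n ℝ} (hA : A.PosSemidef) : (toEuclideanCLM (𝕜 := ℝ) A).IsPositive := by
  rw [← ContinuousLinearMap.isPositive_toLinearMap_iff, coe_toEuclideanCLM_eq_toEuclideanLin]
  exact isPositive_toEuclideanLin_iff.mpr hA

theorem vnorm_eq_norm_toLp {m : ℕ} (v : Fin m → ℝ) : vnorm v = ‖WithLp.toLp 2 v‖ := by
  rw [vnorm, norm_eq_sqrt_real_inner, EuclideanSpace.inner_toLp_toLp, star_trivial]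

theorem stmt_11 (m : ℕ) (H : Matrix (Fin m) (Fin m) ℝ) (hH : H.PosSemidef)
    (v d : Fin m → ℝ) :
    v ⬝ᵥ H.mulVec d ≤ (1 / 2) * (v ⬝ᵥ d + vnorm v * vnorm d) * opNorm H := by
  simpa only [toEuclideanCLM_toLp, EuclideanSpace.inner_toLp_toLp, star_trivial,
    dotProduct_comm d v, vnorm_eq_norm_toLp, opNorm] using
    hH.isPositive_toEuclideanCLM.inner_apply_le (WithLp.toLp 2 v) (WithLp.toLp 2 d)
end

section
/- Let H_1, …, H_C ∈ ℝ^{m×m} be symmetric positive semidefinite, δ ∈ ℝ^C, and v, d ∈ ℝ^m with e₁ = v^T d, e₂ = ‖v‖‖d‖. Then Σ_{j=1}^C δ_j v^T H_j d ≥ (1/2) Σ_{j=1}^C (δ_j e₁ − |δ_j| e₂) ‖H_j‖. -/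
open Matrix

/-!
For a positive operator `T` we have `0 ≤ ⟪T x, x⟫ ≤ ‖T‖ ‖x‖²`, so the symmetric operator
`2T - ‖T‖` has all Rayleigh quotients in `[-‖T‖, ‖T‖]` and hence norm at most `‖T‖`. This gives
`|2 vᵀ H d - ‖H‖ vᵀ d| ≤ ‖H‖ ‖v‖ ‖d‖`; multiplying by `|δ_j|` and summing over `j` yields the claim.
-/

open scoped RealInnerProductSpace

namespace ContinuousLinearMap.IsPositive

variable {E : Type*} [NormedAddCommGroup E] [InnerProductSpace ℝ E] {T : E →L[ℝ] E}

theorem norm_two_smul_sub_norm_smul_id_le (hT : T.IsPositive) :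
    ‖(2 : ℝ) • T - ‖T‖ • ContinuousLinearMap.id ℝ E‖ ≤ ‖T‖ := by
  set S := (2 : ℝ) • T - ‖T‖ • ContinuousLinearMap.id ℝ E
  have hS_apply (x y : E) : ⟪S x, y⟫ = 2 * ⟪T x, y⟫ - ‖T‖ * ⟪x, y⟫ := by
    simp [S, inner_sub_left, inner_smul_left]
  have hS : S.IsSymmetric := fun x y ↦ by
    change ⟪S x, y⟫ = ⟪x, S y⟫
    rw [real_inner_comm (S y), hS_apply, hS_apply, hT.inner_left_eq_inner_right,
      real_inner_comm (T y), real_inner_comm x y]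
  rw [S.norm_eq_iSup_rayleighQuotient hS]
  refine ciSup_le fun x ↦ ?_
  have hlow : 0 ≤ ⟪T x, x⟫ := hT.re_inner_nonneg_left x
  have hup : ⟪T x, x⟫ ≤ ‖T‖ * ‖x‖ ^ 2 := by
    calc ⟪T x, x⟫ ≤ ‖T x‖ * ‖x‖ := real_inner_le_norm _ _
      _ ≤ ‖T‖ * ‖x‖ * ‖x‖ := by gcongr; exact T.le_opNorm x
      _ = _ := by ring
  rw [rayleighQuotient, reApplyInnerSelf_apply, RCLike.re_to_real, hS_apply, abs_div, abs_sq,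
    real_inner_self_eq_norm_sq]
  refine div_le_of_le_mul₀ (sq_nonneg _) (norm_nonneg _) (abs_le.mpr ⟨?_, ?_⟩) <;> linarith

theorem abs_two_inner_sub_le (hT : T.IsPositive) (x y : E) :
    |2 * ⟪x, T y⟫ - ‖T‖ * ⟪x, y⟫| ≤ ‖T‖ * (‖x‖ * ‖y‖) := by
  set S := (2 : ℝ) • T - ‖T‖ • ContinuousLinearMap.id ℝ E
  have hS_apply : ⟪x, S y⟫ = 2 * ⟪x, T y⟫ - ‖T‖ * ⟪x, y⟫ := by
    simp [S, inner_sub_right, inner_smul_right]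
  calc |2 * ⟪x, T y⟫ - ‖T‖ * ⟪x, y⟫| = |⟪x, S y⟫| := by rw [hS_apply]
    _ ≤ ‖x‖ * ‖S y‖ := abs_real_inner_le_norm _ _
    _ ≤ ‖x‖ * (‖S‖ * ‖y‖) := by gcongr; exact S.le_opNorm y
    _ ≤ ‖x‖ * (‖T‖ * ‖y‖) := by gcongr; exact hT.norm_two_smul_sub_norm_smul_id_le
    _ = ‖T‖ * (‖x‖ * ‖y‖) := by ring

end ContinuousLinearMap.IsPositive

theorem Matrix.PosSemidef.abs_two_dotProduct_mulVec_sub_le {m : ℕ}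
    {H : Matrix (Fin m) (Fin m) ℝ} (hH : H.PosSemidef) (v d : Fin m → ℝ) :
    |2 * (v ⬝ᵥ H *ᵥ d) - opNorm H * (v ⬝ᵥ d)| ≤ opNorm H * (vnorm v * vnorm d) := by
  have hpos : (toEuclideanCLM (𝕜 := ℝ) H).IsPositive := isPositive_toEuclideanLin_iff.mpr hH
  have key := hpos.abs_two_inner_sub_le (WithLp.toLp 2 v) (WithLp.toLp 2 d)
  rw [inner_toEuclideanCLM, EuclideanSpace.inner_toLp_toLp, star_trivial, dotProduct_comm d,
    ← vnorm_eq_norm_toLp, ← vnorm_eq_norm_toLp] at key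
  exact key

theorem stmt_15 (m C : ℕ) (H : Fin C → Matrix (Fin m) (Fin m) ℝ)
    (hH : ∀ j, (H j).PosSemidef) (δ : Fin C → ℝ) (v d : Fin m → ℝ) :
    (1 / 2) * ∑ j, (δ j * (v ⬝ᵥ d) - |δ j| * (vnorm v * vnorm d)) * opNorm (H j) ≤
      ∑ j, δ j * (v ⬝ᵥ (H j).mulVec d) := by
  rw [Finset.mul_sum]
  refine Finset.sum_le_sum fun j _ ↦ ?_
  have key := mul_le_mul_of_nonneg_left ((hH j).abs_two_dotProduct_mulVec_sub_le v d)
    (abs_nonneg (δ j))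
  rw [← abs_mul] at key
  linarith [neg_abs_le (δ j * (2 * (v ⬝ᵥ H j *ᵥ d) - opNorm (H j) * (v ⬝ᵥ d)))]
end
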